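/- Let f = F ∘ π_P be a smooth cylinder function and x = (w,c) ∈ G. Then the series Σ_{j=1}^∞ (ẽ_j² f)(x), where ẽ_j denotes the left-invariant derivative along (e_j,0), converges absolutely, each summand equals f''(x)( (e_j, ½ω(w,e_j)), (e_j, ½ω(w,e_j)) ), and Σ_{j=1}^∞ (ẽ_j² f)(x) = Σ_{j=1}^∞ f''(x)((e_j,0),(e_j,0)) + Σ_{j=1}^∞ f''(x)((0,ω(w,e_j)),(e_j,0)) + ¼ Σ_{j=1}^∞ f''(x)((0,ω(w,e_j)),(0,ω(w,e_j))), where each of the three series on the right converges absolutely; moreover the value of the left-hand side is independent of the choice of orthonormal basis (e_j) of H. -/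

import Mathlib

open scoped RealInnerProductSpace


/-- The left-invariant derivative on the Heisenberg-like group `G = W × 𝐂` along the
horizontal direction `(A, 0)`: `(Ãf)(w,c) = f'(w,c)(A, ½ ω(w,A))`. -/
noncomputable def horizD {W C : Type*} [NormedAddCommGroup W] [NormedSpace ℝ W]
    [NormedAddCommGroup C] [NormedSpace ℝ C]
    (ω : W →L[ℝ] W →L[ℝ] C) (A : W) (f : W × C → ℝ) : W × C → ℝ :=
  fun x => fderiv ℝ f x (A, (1 / 2 : ℝ) • ω x.1 A)

lemma tsum_bilin_eq {H E : Type*} [NormedAddCommGroup H] [InnerProductSpace ℝ H]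
    [CompleteSpace H] [NormedAddCommGroup E] [NormedSpace ℝ E]
    (Φ : E →L[ℝ] E →L[ℝ] ℝ) {κ : Type*} [Fintype κ] (g : κ → H) (y : κ → E)
    (b : HilbertBasis ℕ ℝ H) :
    ∑' j, Φ (∑ k, ⟪g k, b j⟫ • y k) (∑ k, ⟪g k, b j⟫ • y k)
      = ∑ k, ∑ k', ⟪g k, g k'⟫ * Φ (y k) (y k') := by
  have h1 : ∀ j, Φ (∑ k, ⟪g k, b j⟫ • y k) (∑ k, ⟪g k, b j⟫ • y k)
      = ∑ k, ∑ k', (⟪g k, b j⟫ * ⟪b j, g k'⟫) * Φ (y k) (y k') := by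
    intro j
    rw [map_sum]
    simp only [ContinuousLinearMap.coe_sum', Finset.sum_apply, map_smul,
      ContinuousLinearMap.coe_smul', Pi.smul_apply, map_sum, smul_eq_mul,
      Finset.mul_sum]
    rw [Finset.sum_comm]
    refine Finset.sum_congr rfl fun k _ => Finset.sum_congr rfl fun k' _ => ?_
    rw [real_inner_comm (b j) (g k')]
    ring
  rw [tsum_congr h1, Summable.tsum_finsetSum]
  · refine Finset.sum_congr rfl fun k _ => ?_
    rw [Summable.tsum_finsetSum]
    · refine Finset.sum_congr rfl fun k' _ => ?_
      rw [tsum_mul_right, b.tsum_inner_mul_inner]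
    · exact fun k' _ => (b.summable_inner_mul_inner (g k) (g k')).mul_right _
  · intro k _
    exact (hasSum_sum fun k' _ =>
      ((b.summable_inner_mul_inner (g k) (g k')).mul_right _).hasSum).summable

set_option maxHeartbeats 1000000 in
/-- For a smooth cylinder function `f = F ∘ π_P` on the Heisenberg-like group
`G = W × 𝐂` and `x = (w,c) ∈ G`, the series `Σ_j (ẽ_j² f)(x)` converges absolutely,
each summand equals `f''(x)((e_j, ½ω(w,e_j)), (e_j, ½ω(w,e_j)))`, the sum decomposes
as `Σ_j f''(x)((e_j,0),(e_j,0)) + Σ_j f''(x)((0,ω(w,e_j)),(e_j,0))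
+ ¼ Σ_j f''(x)((0,ω(w,e_j)),(0,ω(w,e_j)))` with each series absolutely convergent,
and the value of the left-hand side is independent of the choice of orthonormal
basis of `H`. -/
theorem cylinder_sum_second_derivs {W H C : Type*}
    [NormedAddCommGroup W] [NormedSpace ℝ W] [TopologicalSpace.SeparableSpace W]
    [NormedAddCommGroup H] [InnerProductSpace ℝ H] [CompleteSpace H]
    [NormedAddCommGroup C] [InnerProductSpace ℝ C] [FiniteDimensional ℝ C]
    (ι : H →L[ℝ] W) (hι : Function.Injective ι)
    (ω : W →L[ℝ] W →L[ℝ] C)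
    (hskew : ∀ w w' : W, ω w w' = -ω w' w)
    (hvert : ∀ (w : W) (b : HilbertBasis ℕ ℝ H), Summable (fun j => ‖ω w (ι (b j))‖ ^ 2))
    (hHS : ∀ b : HilbertBasis ℕ ℝ H,
      Summable (fun p : ℕ × ℕ => ‖ω (ι (b p.1)) (ι (b p.2))‖ ^ 2))
    (b : HilbertBasis ℕ ℝ H)
    (n : ℕ) (u : Fin n → (W →L[ℝ] ℝ))
    (hu : ∀ (i : Fin n) (j : ℕ), u i (ι (b j)) = if (i : ℕ) = j then 1 else 0)
    (F : W × C → ℝ) (hF : ContDiff ℝ (⊤ : ℕ∞) F)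
    (f : W × C → ℝ)
    (hfdef : f = fun x => F (∑ i, u i x.1 • ι (b i), x.2))
    (x : W × C) :
    (Summable fun j => |horizD ω (ι (b j)) (horizD ω (ι (b j)) f) x|) ∧
    (∀ j, horizD ω (ι (b j)) (horizD ω (ι (b j)) f) x
        = fderiv ℝ (fderiv ℝ f) x (ι (b j), (1 / 2 : ℝ) • ω x.1 (ι (b j)))
            (ι (b j), (1 / 2 : ℝ) • ω x.1 (ι (b j)))) ∧
    (Summable fun j => |fderiv ℝ (fderiv ℝ f) x (ι (b j), 0) (ι (b j), 0)|) ∧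
    (Summable fun j => |fderiv ℝ (fderiv ℝ f) x (0, ω x.1 (ι (b j))) (ι (b j), 0)|) ∧
    (Summable fun j =>
      |fderiv ℝ (fderiv ℝ f) x (0, ω x.1 (ι (b j))) (0, ω x.1 (ι (b j)))|) ∧
    ((∑' j, horizD ω (ι (b j)) (horizD ω (ι (b j)) f) x)
        = (∑' j, fderiv ℝ (fderiv ℝ f) x (ι (b j), 0) (ι (b j), 0))
          + (∑' j, fderiv ℝ (fderiv ℝ f) x (0, ω x.1 (ι (b j))) (ι (b j), 0))
          + (1 / 4 : ℝ)
            * ∑' j, fderiv ℝ (fderiv ℝ f) x (0, ω x.1 (ι (b j))) (0, ω x.1 (ι (b j)))) ∧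
    (∀ b' : HilbertBasis ℕ ℝ H,
      (∑' j, horizD ω (ι (b' j)) (horizD ω (ι (b' j)) f) x)
        = ∑' j, horizD ω (ι (b j)) (horizD ω (ι (b j)) f) x) := by
  classical
  -- the finite-rank projection and the cylinder map L
  set P : W →L[ℝ] W := ∑ i, (u i).smulRight (ι (b i)) with hP
  set L : (W × C) →L[ℝ] (W × C) := P.prodMap (ContinuousLinearMap.id ℝ C) with hLdef
  have hLapp : ∀ y : W × C, L y = (P y.1, y.2) := fun y => rfl
  have hfL : f = fun y => F (L y) := by
    rw [hfdef]; funext y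
    simp [hLapp, hP, ContinuousLinearMap.sum_apply, ContinuousLinearMap.smulRight_apply]
  have hFd : Differentiable ℝ F := hF.differentiable (by simp)
  have hF' : ContDiff ℝ (⊤ : ℕ∞) (fderiv ℝ F) := hF.fderiv_right (by simp)
  have hF'd : Differentiable ℝ (fderiv ℝ F) := hF'.differentiable (by simp)
  -- first derivative of f
  have hfderiv : ∀ y, fderiv ℝ f y = ((fderiv ℝ F) (L y)).comp L := by
    intro y
    rw [hfL, show (fun y => F (L y)) = F ∘ L from rfl,
      fderiv_comp y (hFd _) L.differentiableAt, L.fderiv]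
  set Φ : (W × C) →L[ℝ] (W × C) →L[ℝ] ℝ := fderiv ℝ (fderiv ℝ F) (L x) with hΦ
  -- derivative of y ↦ F'(L y)
  have hc : ∀ y, fderiv ℝ (fun z => (fderiv ℝ F) (L z)) y
      = (fderiv ℝ (fderiv ℝ F) (L y)).comp L := by
    intro y
    rw [show (fun z => fderiv ℝ F (L z)) = (fderiv ℝ F) ∘ L from rfl,
]
    exact (HasFDerivAt.comp (g := fderiv ℝ F) y (hF'd (L y)).hasFDerivAt L.hasFDerivAt).fderiv
  have hcd : Differentiable ℝ (fun z => (fderiv ℝ F) (L z)) :=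
    fun z => DifferentiableAt.comp (g := fderiv ℝ F) z (hF'd (L z)) L.differentiableAt
  -- second derivative of f
  set R : ((W × C) →L[ℝ] ℝ) →L[ℝ] ((W × C) →L[ℝ] ℝ) :=
    (ContinuousLinearMap.compL ℝ (W × C) (W × C) ℝ).flip L with hR
  have hRapp : ∀ φ : (W × C) →L[ℝ] ℝ, R φ = φ.comp L := fun φ => rfl
  have hS : ∀ ξ η, fderiv ℝ (fderiv ℝ f) x ξ η = Φ (L ξ) (L η) := by
    intro ξ η
    have h0 : fderiv ℝ f = fun y => R ((fderiv ℝ F) (L y)) :=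
      funext fun y => (hfderiv y).trans (hRapp _).symm
    have hc' : HasFDerivAt (fun z => fderiv ℝ F (L z))
        ((fderiv ℝ (fderiv ℝ F) (L x)).comp L) x := by
      rw [← hc x]; exact (hcd x).hasFDerivAt
    have h2 := hc'.clm_comp (hasFDerivAt_const L x)
    have h0' : fderiv ℝ f
        = fun y => ((fun z => fderiv ℝ F (L z)) y).comp ((fun _ : W × C => L) y) :=
      funext hfderiv
    rw [h0', h2.fderiv]
    simp [ContinuousLinearMap.add_apply, ContinuousLinearMap.coe_comp',
      Function.comp_apply, ContinuousLinearMap.flip_apply,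
      ContinuousLinearMap.compL_apply]
    rfl
  -- skew implies ω w w = 0
  have hzero : ∀ w : W, ω w w = 0 := by
    intro w
    have h2 : (2 : ℝ) • ω w w = 0 := by
      rw [two_smul]; nth_rewrite 1 [hskew w w]; simp
    exact (smul_eq_zero.mp h2).resolve_left (by norm_num)
  -- the key pointwise formula for the iterated horizontal derivative
  have hkey : ∀ A : W, horizD ω A (horizD ω A f) x
      = Φ (L (A, (1/2 : ℝ) • ω x.1 A)) (L (A, (1/2 : ℝ) • ω x.1 A)) := by
    intro A
    -- horizD ω A f = fun y => (fderiv F (L y)) ((P A, 0) + N y)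
    set N : (W × C) →L[ℝ] (W × C) :=
      (0 : (W × C) →L[ℝ] W).prod
        (((1/2 : ℝ) • (ω.flip A)).comp (ContinuousLinearMap.fst ℝ W C)) with hN
    have hNapp : ∀ y : W × C, N y = (0, (1/2 : ℝ) • ω y.1 A) := fun y => rfl
    have h1 : horizD ω A f = fun y => (fderiv ℝ F (L y)) (((P A, 0) : W × C) + N y) := by
      funext y
      rw [horizD, hfderiv y]
      simp [hNapp, Prod.mk_add_mk, hLapp]
    have hud : DifferentiableAt ℝ (fun y : W × C => ((P A, 0) : W × C) + N y) x :=
      (differentiable_const _).add N.differentiable |>.differentiableAt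
    have hfu : fderiv ℝ (fun y : W × C => ((P A, 0) : W × C) + N y) x = N := by
      rw [fderiv_const_add, N.fderiv]
    rw [horizD, h1, fderiv_clm_apply (hcd x) hud, hfu, hc]
    simp only [ContinuousLinearMap.add_apply, ContinuousLinearMap.coe_comp',
      Function.comp_apply, ContinuousLinearMap.flip_apply]
    rw [hNapp]
    simp only [hzero, smul_zero]
    have : (fderiv ℝ F (L x)) ((0 : W), (0 : C)) = 0 := by
      have : ((0 : W), (0 : C)) = (0 : W × C) := rfl
      rw [this, map_zero]
    rw [this, zero_add]
    congr 1
    rw [hNapp, Prod.mk_add_mk, add_zero, zero_add, hLapp]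
  -- P kills ι (b j) for j ≥ n
  have hPbj : ∀ j, n ≤ j → P (ι (b j)) = 0 := by
    intro j hj
    simp only [hP, ContinuousLinearMap.sum_apply, ContinuousLinearMap.smulRight_apply, hu]
    refine Finset.sum_eq_zero fun i _ => ?_
    rw [if_neg (Nat.ne_of_lt (lt_of_lt_of_le i.isLt hj)), zero_smul]
  set S : (W × C) →L[ℝ] (W × C) →L[ℝ] ℝ := fderiv ℝ (fderiv ℝ f) x with hSdef
  have hfC : ContDiff ℝ (⊤ : ℕ∞) f := by rw [hfL]; exact hF.comp L.contDiff
  have hsymm : ∀ v w, S v w = S w v := hfC.contDiffAt.isSymmSndFDerivAt (by rw [minSmoothness_of_isRCLikeNormedField]; exact WithTop.coe_le_coe.mpr le_top)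
  -- abbreviations
  have ht1 : ∀ j, n ≤ j → S (ι (b j), 0) (ι (b j), 0) = 0 := by
    intro j hj
    rw [hS]
    have : L ((ι (b j), 0) : W × C) = 0 := by
      rw [hLapp]; simp [hPbj j hj, Prod.ext_iff]
    rw [this, map_zero]
  have ht2 : ∀ j, n ≤ j → S (0, ω x.1 (ι (b j))) (ι (b j), 0) = 0 := by
    intro j hj
    rw [hS]
    have : L ((ι (b j), 0) : W × C) = 0 := by
      rw [hLapp]; simp [hPbj j hj, Prod.ext_iff]
    rw [this, map_zero]
  -- pointwise decomposition
  have hdecomp : ∀ (a : W) (c0 : C),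
      S (a, (1/2 : ℝ) • c0) (a, (1/2 : ℝ) • c0)
        = S (a, 0) (a, 0) + S (0, c0) (a, 0) + (1/4 : ℝ) * S (0, c0) (0, c0) := by
    intro a c0
    have e : ((a, (1/2 : ℝ) • c0) : W × C) = (a, 0) + (1/2 : ℝ) • ((0, c0) : W × C) := by
      simp [Prod.ext_iff]
    rw [e]
    simp only [map_add, map_smul, ContinuousLinearMap.add_apply,
      ContinuousLinearMap.coe_smul', Pi.smul_apply, ContinuousLinearMap.smul_apply,
      smul_eq_mul]
    rw [hsymm (a, 0) (0, c0)]
    ring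
  -- summabilities
  have hsum1 : Summable fun j => |S (ι (b j), 0) (ι (b j), 0)| := by
    apply summable_of_ne_finset_zero (s := Finset.range n)
    intro j hj
    rw [ht1 j (by simpa using hj), abs_zero]
  have hsum2 : Summable fun j => |S (0, ω x.1 (ι (b j))) (ι (b j), 0)| := by
    apply summable_of_ne_finset_zero (s := Finset.range n)
    intro j hj
    rw [ht2 j (by simpa using hj), abs_zero]
  have hsum3 : Summable fun j => |S (0, ω x.1 (ι (b j))) (0, ω x.1 (ι (b j)))| := by
    letI : SeminormedAddCommGroup ((W × C) →L[ℝ] ℝ) := ContinuousLinearMap.toSeminormedAddCommGroup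
    letI : NormedSpace ℝ ((W × C) →L[ℝ] ℝ) := ContinuousLinearMap.toNormedSpace
    refine Summable.of_nonneg_of_le (fun j => abs_nonneg _) (fun j => ?_)
      ((hvert x.1 b).mul_left ‖S‖)
    have hv : ‖((0 : W), ω x.1 (ι (b j)))‖ = ‖ω x.1 (ι (b j))‖ := by
      rw [Prod.norm_def]; simp
    calc |S (0, ω x.1 (ι (b j))) (0, ω x.1 (ι (b j)))|
        ≤ ‖S (0, ω x.1 (ι (b j)))‖ * ‖((0 : W), ω x.1 (ι (b j)))‖ :=
          (S _).le_opNorm _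
      _ ≤ (‖S‖ * ‖((0 : W), ω x.1 (ι (b j)))‖) * ‖((0 : W), ω x.1 (ι (b j)))‖ :=
          mul_le_mul_of_nonneg_right (S.le_opNorm _) (norm_nonneg _)
      _ = ‖S‖ * ‖ω x.1 (ι (b j))‖ ^ 2 := by rw [hv]; ring
  have hS1 : Summable fun j => S (ι (b j), 0) (ι (b j), 0) := summable_abs_iff.mp hsum1
  have hS2 : Summable fun j => S (0, ω x.1 (ι (b j))) (ι (b j), 0) := summable_abs_iff.mp hsum2
  have hS3 : Summable fun j => S (0, ω x.1 (ι (b j))) (0, ω x.1 (ι (b j))) :=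
    summable_abs_iff.mp hsum3
  -- claim 2
  have hclaim2 : ∀ j, horizD ω (ι (b j)) (horizD ω (ι (b j)) f) x
      = S (ι (b j), (1/2 : ℝ) • ω x.1 (ι (b j))) (ι (b j), (1/2 : ℝ) • ω x.1 (ι (b j))) := by
    intro j
    rw [hkey (ι (b j)), hS]
  have hpt : ∀ j, horizD ω (ι (b j)) (horizD ω (ι (b j)) f) x
      = S (ι (b j), 0) (ι (b j), 0) + S (0, ω x.1 (ι (b j))) (ι (b j), 0)
        + (1/4 : ℝ) * S (0, ω x.1 (ι (b j))) (0, ω x.1 (ι (b j))) := by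
    intro j; rw [hclaim2 j, hdecomp]
  have hLHSsummable : Summable fun j => horizD ω (ι (b j)) (horizD ω (ι (b j)) f) x := by
    rw [show (fun j => horizD ω (ι (b j)) (horizD ω (ι (b j)) f) x)
      = fun j => S (ι (b j), 0) (ι (b j), 0) + S (0, ω x.1 (ι (b j))) (ι (b j), 0)
        + (1/4 : ℝ) * S (0, ω x.1 (ι (b j))) (0, ω x.1 (ι (b j))) from funext hpt]
    exact (hS1.add hS2).add (hS3.mul_left _)
  refine ⟨hLHSsummable.abs, hclaim2, hsum1, hsum2, hsum3, ?_, ?_⟩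
  · rw [tsum_congr hpt, Summable.tsum_add (hS1.add hS2) (hS3.mul_left _), Summable.tsum_add hS1 hS2,
      tsum_mul_left]
  · -- basis independence
    intro b'
    -- representation of h ↦ L (ι h, ½ ω(w, ι h)) as a finite-rank map
    set cb : OrthonormalBasis (Fin (Module.finrank ℝ C)) ℝ C := stdOrthonormalBasis ℝ C with hcb
    set g : (Fin n ⊕ Fin (Module.finrank ℝ C)) → H := fun k =>
      Sum.rec (fun i => (InnerProductSpace.toDual ℝ H).symm ((u i).comp ι))
        (fun l => (InnerProductSpace.toDual ℝ H).symm
          ((1/2 : ℝ) • ((innerSL ℝ (cb l)).comp ((ω x.1).comp ι)))) k with hg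
    set y : (Fin n ⊕ Fin (Module.finrank ℝ C)) → (W × C) := fun k =>
      Sum.rec (fun i => ((ι (b i), 0) : W × C)) (fun l => ((0, cb l) : W × C)) k with hy
    have hrep : ∀ h : H,
        ((P (ι h), (1/2 : ℝ) • ω x.1 (ι h)) : W × C) = ∑ k, ⟪g k, h⟫ • y k := by
      intro h
      have e1 : ∀ i : Fin n, ⟪g (Sum.inl i), h⟫ = u i (ι h) := fun i => by
        simp [hg, InnerProductSpace.toDual_symm_apply]
      have e2 : ∀ l, ⟪g (Sum.inr l), h⟫ = (1/2 : ℝ) * ⟪cb l, ω x.1 (ι h)⟫ := fun l => by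
        simp [hg, InnerProductSpace.toDual_symm_apply, real_inner_smul_left]
      rw [Fintype.sum_sum_type]
      simp only [e1, e2, hy]
      have hfst : ∑ i : Fin n, (u i (ι h)) • ((ι (b i), 0) : W × C)
          = ((P (ι h), 0) : W × C) := by
        rw [Prod.ext_iff]
        constructor
        · simp [Prod.fst_sum, hP, ContinuousLinearMap.sum_apply,
            ContinuousLinearMap.smulRight_apply]
        · simp [Prod.snd_sum]
      have hsnd : ∑ l, ((1/2 : ℝ) * ⟪cb l, ω x.1 (ι h)⟫) • ((0, cb l) : W × C)
          = ((0, (1/2 : ℝ) • ω x.1 (ι h)) : W × C) := by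
        rw [Prod.ext_iff]
        constructor
        · simp [Prod.fst_sum]
        · simp only [Prod.snd_sum, Prod.smul_mk]
          simp_rw [mul_smul]
          rw [← Finset.smul_sum, cb.sum_repr']
      rw [hfst, hsnd, Prod.mk_add_mk, add_zero, zero_add]
    have hkeyall : ∀ (bb : HilbertBasis ℕ ℝ H),
        (∑' j, horizD ω (ι (bb j)) (horizD ω (ι (bb j)) f) x)
          = ∑ k, ∑ k', ⟪g k, g k'⟫ * Φ (y k) (y k') := by
      intro bb
      have hptb : ∀ j, horizD ω (ι (bb j)) (horizD ω (ι (bb j)) f) x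
          = Φ (∑ k, ⟪g k, bb j⟫ • y k) (∑ k, ⟪g k, bb j⟫ • y k) := by
        intro j
        rw [hkey (ι (bb j))]
        have hLv : L ((ι (bb j), (1/2 : ℝ) • ω x.1 (ι (bb j))) : W × C)
            = ∑ k, ⟪g k, bb j⟫ • y k := by
          rw [hLapp]; exact hrep (bb j)
        rw [hLv]
      rw [tsum_congr hptb, tsum_bilin_eq]
    rw [hkeyall b', hkeyall b]
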